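/- Cut admissibility for atomic derivability: for atomic multisets P = {p_1,…,p_n} and S, atom q, and base B, the following are equivalent: (1) P ⊎ S ⊢_B q; (2) for every base C ⊇ B and all atomic multisets T_1,…,T_n with T_i ⊢_C p_i for each i, it holds that T_1 ⊎ … ⊎ T_n ⊎ S ⊢_C q. -/

import Mathlib

abbrev Atom := ℕ
abbrev ASeq := Multiset Atom × Atom
abbrev Box := Multiset ASeq
abbrev ARule := Multiset Box × Box × Atom
abbrev Base := Set ARule

/-- An atom `d` is persistent in `B` if there is a rule `⟨∅, S, d⟩ ∈ B` with `S` nonempty. -/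
def Persistent (B : Base) (d : Atom) : Prop :=
  ∃ S : Box, S ≠ 0 ∧ ((0 : Multiset Box), S, d) ∈ B

/-- Atomic derivability in a base. -/
inductive Deriv (B : Base) : Multiset Atom → Atom → Prop
  | ref (p : Atom) : Deriv B {p} p
  | app (S : Box) (p : Atom)
      (bc : List (Box × Multiset Atom))
      (dc : List (Atom × Multiset Atom))
      (hrule : ((↑(bc.map Prod.fst) : Multiset Box), S, p) ∈ B)
      (hpers : ∀ x ∈ dc, Persistent B x.1)
      (hbox : ∀ x ∈ bc, ∀ s ∈ x.1, Deriv B (x.2 + s.1) s.2)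
      (hd : ∀ x ∈ dc, Deriv B x.2 x.1)
      (hS : ∀ s ∈ S, Deriv B ((↑(dc.map Prod.fst) : Multiset Atom) + s.1) s.2) :
      Deriv B ((bc.map Prod.snd).sum + (dc.map Prod.snd).sum) p

/-!
Cut is admissible by induction on the derivation of the major premise `Δ ⊢ q`, with `p ∈ Δ`.
At `Ref` the cut is the derivation `T ⊢ p` itself. At `App` the context is split among the
premises, so `p` lies in the context of a single one (a premise box or a persistent atom);
the cut is pushed into that premise, whose context is enlarged by `T`, and the rule reapplied.
Cutting the `pᵢ` one at a time gives (1) ⇒ (2), after weakening the base from `B` to `C`;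
(2) ⇒ (1) takes `C = B` and `Tᵢ = {pᵢ}`, derived by `Ref`.
-/

section ReplaceInContext

variable {α β : Type*}

theorem exists_eq_append_cons_of_mem_sum_map_snd {l : List (α × Multiset β)} {p : β}
    (h : p ∈ (l.map Prod.snd).sum) : ∃ l₁ x l₂, l = l₁ ++ x :: l₂ ∧ p ∈ x.2 := by
  induction l with
  | nil => simp at h
  | cons a l ih =>
    rw [List.map_cons, List.sum_cons] at h
    rcases Multiset.mem_add.mp h with h | h
    · exact ⟨[], a, l, rfl, h⟩
    · obtain ⟨l₁, x, l₂, rfl, hp⟩ := ih h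
      exact ⟨a :: l₁, x, l₂, rfl, hp⟩

theorem map_fst_append_cons_replace_snd (l₁ l₂ : List (α × Multiset β)) (x : α × Multiset β)
    (Γ : Multiset β) : (l₁ ++ (x.1, Γ) :: l₂).map Prod.fst = (l₁ ++ x :: l₂).map Prod.fst := by
  simp

theorem sum_map_snd_append_cons_erase [DecidableEq β] (l₁ l₂ : List (α × Multiset β))
    {x : α × Multiset β} {p : β} (hp : p ∈ x.2) (T : Multiset β) :
    ((l₁ ++ (x.1, T + x.2.erase p) :: l₂).map Prod.snd).sum =
      T + ((l₁ ++ x :: l₂).map Prod.snd).sum.erase p := by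
  simp only [List.map_append, List.map_cons, List.sum_append, List.sum_cons,
    Multiset.erase_add_right_pos _ (Multiset.mem_add.mpr (Or.inl hp)),
    Multiset.erase_add_left_pos _ hp]
  abel

theorem mem_append_cons_replace {l₁ l₂ : List α} {x y z : α} (h : y ∈ l₁ ++ z :: l₂) :
    y = z ∨ y ∈ l₁ ++ x :: l₂ := by
  simp only [List.mem_append, List.mem_cons] at h ⊢
  tauto

end ReplaceInContext

theorem Deriv.mono {B C : Base} (hBC : B ⊆ C) {Γ : Multiset Atom} {q : Atom}
    (h : Deriv B Γ q) : Deriv C Γ q := by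
  induction h with
  | ref p => exact Deriv.ref p
  | app S p bc dc hrule hpers _ _ _ ihbox ihd ihS =>
    exact Deriv.app S p bc dc (hBC hrule)
      (fun x hx => (hpers x hx).imp fun _ h => ⟨h.1, hBC h.2⟩) ihbox ihd ihS

theorem Deriv.cut {C : Base} {T : Multiset Atom} {p : Atom} (hT : Deriv C T p)
    {Δ : Multiset Atom} {q : Atom} (h : Deriv C Δ q) (hp : p ∈ Δ) :
    Deriv C (T + Δ.erase p) q := by
  induction h with
  | ref r =>
    obtain rfl := Multiset.mem_singleton.mp hp
    simpa using hT
  | app S r bc dc hrule hpers hbox hd hS ihbox ihd _ =>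
    rcases Multiset.mem_add.mp hp with hp | hp
    · obtain ⟨l₁, x, l₂, rfl, hpx⟩ := exists_eq_append_cons_of_mem_sum_map_snd hp
      rw [Multiset.erase_add_left_pos _ hp, ← add_assoc,
        ← sum_map_snd_append_cons_erase l₁ l₂ hpx T]
      refine Deriv.app S r _ dc (by rwa [map_fst_append_cons_replace_snd]) hpers ?_ hd hS
      intro y hy s hs
      rcases mem_append_cons_replace hy with rfl | hy
      · have := ihbox x (by simp) s hs (Multiset.mem_add.mpr (Or.inl hpx))
        rwa [Multiset.erase_add_left_pos _ hpx, ← add_assoc] at this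
      · exact hbox y hy s hs
    · obtain ⟨l₁, x, l₂, rfl, hpx⟩ := exists_eq_append_cons_of_mem_sum_map_snd hp
      rw [Multiset.erase_add_right_pos _ hp, add_left_comm,
        ← sum_map_snd_append_cons_erase l₁ l₂ hpx T]
      refine Deriv.app S r bc _ hrule ?_ hbox ?_ (by rwa [map_fst_append_cons_replace_snd])
      · intro y hy
        rcases mem_append_cons_replace hy with rfl | hy
        · exact hpers x (by simp)
        · exact hpers y hy
      · intro y hy
        rcases mem_append_cons_replace hy with rfl | hy
        · exact ihd x (by simp) hpx
        · exact hd y hy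

theorem Deriv.cut_forall₂ {C : Base} {Ts : List (Multiset Atom)} {ps : List Atom}
    (hTs : List.Forall₂ (fun T p => Deriv C T p) Ts ps) {S : Multiset Atom} {q : Atom}
    (h : Deriv C (↑ps + S) q) : Deriv C (Ts.sum + S) q := by
  induction hTs generalizing S with
  | nil => simpa using h
  | @cons T p Ts ps hT _ ih =>
    have hps : Deriv C (↑ps + p ::ₘ S) q := by
      rwa [Multiset.add_cons, ← Multiset.cons_add, Multiset.cons_coe]
    have := hT.cut (ih hps) (Multiset.mem_add.mpr (Or.inr (Multiset.mem_cons_self p S)))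
    rwa [Multiset.erase_add_right_pos _ (Multiset.mem_cons_self p S), Multiset.erase_cons_head,
      ← add_assoc, ← List.sum_cons] at this

theorem atomic_cut_admissibility (B : Base) (ps : List Atom) (S : Multiset Atom) (q : Atom) :
    Deriv B ((↑ps : Multiset Atom) + S) q ↔
      ∀ C : Base, B ⊆ C → ∀ Ts : List (Multiset Atom),
        List.Forall₂ (fun T p => Deriv C T p) Ts ps →
        Deriv C (Ts.sum + S) q := by
  refine ⟨fun h C hBC Ts hTs => Deriv.cut_forall₂ hTs (h.mono hBC), fun h => ?_⟩
  have hrefl : List.Forall₂ (fun T p => Deriv B T p) (ps.map fun p => {p}) ps :=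
    List.forall₂_map_left_iff.mpr (List.forall₂_same.mpr fun p _ => Deriv.ref p)
  have hsum : (ps.map fun p => ({p} : Multiset Atom)).sum = ↑ps := by
    rw [← Multiset.sum_coe, ← Multiset.map_coe, Multiset.sum_map_singleton]
  simpa only [hsum] using h B subset_rfl _ hrefl
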